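/- arXiv:1312.3822 — 2 statements merged into one kernel-verified Lean document; each statement's English description precedes it below -/
import Mathlib

section
/- Monotonicity of collision relative entropy in the second argument: if σ′ ≥ σ ≥ 0 (in the Loewner order) and ρ is positive semi-definite with supp(ρ) ⊆ supp(σ), then tr[((σ′)^{-1/4} ρ (σ′)^{-1/4})²] ≤ tr[(σ^{-1/4} ρ σ^{-1/4})²], i.e., D₂(ρ‖σ′) ≤ D₂(ρ‖σ). -/
open Matrix BigOperators ComplexOrder Kronecker

variable {n : Type*} [Fintype n] [DecidableEq n]

/-- Apply a real function to a matrix via its spectral decomposition (0 if not Hermitian). -/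
noncomputable def mFun (f : ℝ → ℝ) (A : Matrix n n ℂ) : Matrix n n ℂ :=
  if hA : A.IsHermitian then
    (hA.eigenvectorUnitary : Matrix n n ℂ) *
      Matrix.diagonal (fun i => (f (hA.eigenvalues i) : ℂ)) *
      star (hA.eigenvectorUnitary : Matrix n n ℂ)
  else 0

/-- Fractional power of the Moore–Penrose pseudoinverse type: `x ↦ x^r` on the support. -/
noncomputable def mpow (r : ℝ) (A : Matrix n n ℂ) : Matrix n n ℂ :=
  mFun (fun x => if x = 0 then 0 else x ^ r) A

/-- Projection onto nonnegative eigenspaces of a Hermitian matrix. -/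
noncomputable def projNonneg (A : Matrix n n ℂ) : Matrix n n ℂ :=
  mFun (fun x => if 0 ≤ x then 1 else 0) A

/-- Projection onto strictly positive eigenspaces of a Hermitian matrix. -/
noncomputable def projPos (A : Matrix n n ℂ) : Matrix n n ℂ :=
  mFun (fun x => if 0 < x then 1 else 0) A

/-- supp ρ ⊆ supp σ, phrased via kernels (for PSD matrices). -/
def suppLE (ρ σ : Matrix n n ℂ) : Prop :=
  ∀ v : n → ℂ, σ.mulVec v = 0 → ρ.mulVec v = 0

/-- Exponential of the collision relative entropy, exp D₂(ρ‖σ) = tr[(σ^{-1/4} ρ σ^{-1/4})²]. -/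
noncomputable def expD2 (ρ σ : Matrix n n ℂ) : ℝ :=
  (((mpow (-(4:ℝ)⁻¹) σ) * ρ * (mpow (-(4:ℝ)⁻¹) σ)) ^ 2).trace.re

/-- Collision relative entropy (base 2). -/
noncomputable def D2 (ρ σ : Matrix n n ℂ) : ℝ := Real.logb 2 (expD2 ρ σ)

/-- Information spectrum relative entropy. -/
noncomputable def Ds (ε : ℝ) (ρ σ : Matrix n n ℂ) : ℝ :=
  sSup {R : ℝ | Complex.re (Matrix.trace (ρ * projNonneg ((2:ℝ)^R • σ - ρ))) ≤ ε}

/-- Density matrix. -/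
def IsDensity (ρ : Matrix n n ℂ) : Prop := ρ.PosSemidef ∧ ρ.trace = 1

/-!
For `ε > 0` the map `x ↦ x ^ (-1/2)` reverses the order `σ + ε ≤ σ' + ε`: `x ↦ x ^ (1/2)` is
operator monotone and inversion is operator antitone. Compressing by `√ρ` and letting `ε → 0`
gives `√ρ σ' ^ (-1/2) √ρ ≤ √ρ σ ^ (-1/2) √ρ`; the limit exists because `√ρ` vanishes on
`ker σ ⊇ ker σ'`, the only place where `(σ + ε) ^ (-1/2)` blows up. By cyclicity of the trace,
`tr[(σ^{-1/4} ρ σ^{-1/4})²] = tr[(√ρ σ^{-1/2} √ρ)²]`, and `A ↦ tr A²` is monotone on positive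
matrices since `B² - A² = (B - A) B + A (B - A)`.
-/

open Filter Topology
open scoped MatrixOrder Matrix.Norms.L2Operator

lemma Set.Finite.tendstoUniformlyOn {α β ι : Type*} [UniformSpace β] {s : Set α} (hs : s.Finite)
    {F : ι → α → β} {f : α → β} {l : Filter ι} (h : ∀ x ∈ s, Tendsto (F · x) l (𝓝 (f x))) :
    TendstoUniformlyOn F f l s := fun _ hu =>
  hs.eventually_all.2 fun x hx => Uniform.tendsto_nhds_right.1 (h x hx) hu

namespace CFC

variable {A : Type*} [CStarAlgebra A] [PartialOrder A] [StarOrderedRing A]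

lemma rpow_neg_le_rpow_neg {p : ℝ} (hp : p ∈ Set.Icc 0 1) {a b : A} (hab : a ≤ b)
    (ha : IsStrictlyPositive a) : b ^ (-p) ≤ a ^ (-p) := by
  rw [neg_eq_neg_one_mul, ← rpow_rpow a (-1) p (by norm_num),
    ← rpow_rpow b (-1) p (by norm_num) (ha.of_le hab)]
  exact rpow_le_rpow hp (CStarAlgebra.rpow_neg_one_le_rpow_neg_one hab)

end CFC

namespace Matrix

lemma continuousOn_spectrum (f : ℝ → ℝ) (A : Matrix n n ℂ) : ContinuousOn f (spectrum ℝ A) :=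
  finite_real_spectrum.continuousOn f

variable {A : Matrix n n ℂ}

lemma rpow_add' (hA : 0 ≤ A) {x y : ℝ} (hxy : x + y ≠ 0) : A ^ (x + y) = A ^ x * A ^ y := by
  rw [CFC.rpow_eq_cfc_real hA, CFC.rpow_eq_cfc_real hA, CFC.rpow_eq_cfc_real hA,
    ← cfc_mul _ _ A (continuousOn_spectrum _ A) (continuousOn_spectrum _ A)]
  exact cfc_congr fun t ht => Real.rpow_add' (spectrum_nonneg_of_nonneg hA ht) hxy

lemma add_algebraMap_rpow (hA : 0 ≤ A) {ε : ℝ} (hε : 0 < ε) (p : ℝ) :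
    (A + algebraMap ℝ _ ε) ^ p = cfc (fun x => (x + ε) ^ p) A := by
  have hAε : 0 ≤ A + algebraMap ℝ _ ε := add_nonneg hA (algebraMap_nonneg _ hε.le)
  rw [CFC.rpow_eq_cfc_real hAε, ← cfc_id' ℝ A hA.posSemidef.isHermitian.isSelfAdjoint,
    ← cfc_add_const ε _ A (continuousOn_spectrum _ A), cfc_id' ℝ A,
    ← cfc_comp (fun x => x ^ p) (fun x => x + ε) A hA.posSemidef.isHermitian.isSelfAdjoint
      ((finite_real_spectrum.image _).continuousOn _) (continuousOn_spectrum _ A)]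
  rfl

end Matrix

lemma mFun_eq_cfc {A : Matrix n n ℂ} (hA : A.IsHermitian) (f : ℝ → ℝ) : mFun f A = cfc f A := by
  rw [hA.cfc_eq, mFun, dif_pos hA]
  rfl

lemma mpow_eq_rpow {A : Matrix n n ℂ} (hA : 0 ≤ A) {r : ℝ} (hr : r ≠ 0) : mpow r A = A ^ r := by
  rw [mpow, mFun_eq_cfc hA.posSemidef.isHermitian, CFC.rpow_eq_cfc_real hA]
  refine cfc_congr fun x _ => ?_
  split_ifs with hx
  · rw [hx, Real.zero_rpow hr]
  · rfl

namespace suppLE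

open Matrix

variable {M ρ τ σ σ' : Matrix n n ℂ}

omit [DecidableEq n] in
lemma of_le (h : suppLE M σ) (hσ : 0 ≤ σ) (hσσ' : σ ≤ σ') : suppLE M σ' := fun v hv => by
  refine h v ((hσ.posSemidef.dotProduct_mulVec_zero_iff v).1 (le_antisymm ?_ ?_))
  · have := (le_iff.mp hσσ').dotProduct_mulVec_nonneg v
    rwa [sub_mulVec, dotProduct_sub, hv, dotProduct_zero, zero_sub, neg_nonneg] at this
  · exact hσ.posSemidef.dotProduct_mulVec_nonneg v

lemma sqrt (h : suppLE ρ τ) (hρ : 0 ≤ ρ) : suppLE (CFC.sqrt ρ) τ := fun v hv => by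
  rw [← dotProduct_star_self_eq_zero, star_mulVec, ← dotProduct_mulVec, mulVec_mulVec,
    (CFC.sqrt_nonneg ρ).posSemidef.isHermitian.eq, CFC.sqrt_mul_sqrt_self ρ hρ, h v hv,
    dotProduct_zero]

lemma mul_cfc_eq (h : suppLE M τ) (hτ : τ.IsHermitian) {f g : ℝ → ℝ}
    (hfg : Set.EqOn f g (spectrum ℝ τ \ {0})) : M * cfc f τ = M * cfc g τ := by
  -- `cfc (f - g) τ` maps into `ker τ ⊆ ker M`
  have hτD : τ * cfc (fun x => f x - g x) τ = 0 := by
    nth_rw 1 [← cfc_id' ℝ τ hτ.isSelfAdjoint]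
    rw [← cfc_mul _ _ τ (continuousOn_spectrum _ τ) (continuousOn_spectrum _ τ)]
    refine (cfc_congr fun x hx => ?_).trans (cfc_zero ℝ τ)
    by_cases hx0 : x = 0
    · simp [hx0]
    · simp [hfg ⟨hx, hx0⟩]
  rw [← sub_eq_zero, ← mul_sub, ← cfc_sub f g τ (continuousOn_spectrum _ τ)
    (continuousOn_spectrum _ τ)]
  refine ext_of_mulVec_single fun i => ?_
  rw [zero_mulVec, ← mulVec_mulVec]
  exact h _ (by rw [mulVec_mulVec, hτD, zero_mulVec])

lemma mul_rpow_neg_mul_rpow (h : suppLE M τ) (hτ : 0 ≤ τ) (r : ℝ) :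
    M * (τ ^ (-r) * τ ^ r) = M := by
  rw [CFC.rpow_eq_cfc_real hτ, CFC.rpow_eq_cfc_real hτ,
    ← cfc_mul _ _ τ (continuousOn_spectrum _ τ) (continuousOn_spectrum _ τ),
    h.mul_cfc_eq hτ.posSemidef.isHermitian (g := fun _ => 1), cfc_const_one ℝ τ, mul_one]
  intro x ⟨hx, hx0⟩
  have hxpos : 0 < x := (spectrum_nonneg_of_nonneg hτ hx).lt_of_ne' hx0
  simp only [Real.rpow_neg hxpos.le, inv_mul_cancel₀ (Real.rpow_pos_of_pos hxpos r).ne']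

end suppLE

namespace Matrix

variable {M τ σ σ' : Matrix n n ℂ}

lemma tendsto_mul_add_algebraMap_rpow (hτ : 0 ≤ τ) (hM : suppLE M τ) (p : ℝ) :
    Tendsto (fun ε : ℝ => M * (τ + algebraMap ℝ _ ε) ^ p) (𝓝[>] 0) (𝓝 (M * τ ^ p)) := by
  let F : ℝ → ℝ → ℝ := fun ε x => if x = 0 then 0 ^ p else (x + ε) ^ p
  have hF : ∀ᶠ ε in 𝓝[>] 0, M * cfc (F ε) τ = M * (τ + algebraMap ℝ _ ε) ^ p := by
    filter_upwards [self_mem_nhdsWithin] with ε hε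
    rw [add_algebraMap_rpow hτ hε]
    exact hM.mul_cfc_eq hτ.posSemidef.isHermitian fun x hx => if_neg hx.2
  have hpointwise : ∀ x : ℝ, Tendsto (F · x) (𝓝[>] 0) (𝓝 (x ^ p)) := by
    intro x
    by_cases hx : x = 0
    · simp only [F, hx, if_true]
      exact tendsto_const_nhds
    · simp only [F, hx, if_false]
      have : ContinuousAt (fun ε : ℝ => (x + ε) ^ p) 0 :=
        (continuousAt_const.add continuousAt_id).rpow_const (Or.inl (by simpa using hx))
      simpa using this.tendsto.mono_left nhdsWithin_le_nhds
  have hcfc : Tendsto (fun ε => cfc (F ε) τ) (𝓝[>] 0) (𝓝 (cfc (· ^ p) τ)) :=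
    tendsto_cfc_fun (finite_real_spectrum.tendstoUniformlyOn fun x _ => hpointwise x)
      (Eventually.of_forall fun ε => continuousOn_spectrum _ τ)
  rw [CFC.rpow_eq_cfc_real hτ]
  exact (hcfc.const_mul M).congr' hF

lemma mul_rpow_neg_mul_star_le (hσ : 0 ≤ σ) (hσσ' : σ ≤ σ') (hM : suppLE M σ) {p : ℝ}
    (hp : p ∈ Set.Icc 0 1) : M * σ' ^ (-p) * star M ≤ M * σ ^ (-p) * star M := by
  have hσ' : 0 ≤ σ' := hσ.trans hσσ'
  refine le_of_tendsto_of_tendsto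
    ((tendsto_mul_add_algebraMap_rpow hσ' (hM.of_le hσ hσσ') (-p)).mul_const (star M))
    ((tendsto_mul_add_algebraMap_rpow hσ hM (-p)).mul_const (star M)) ?_
  filter_upwards [self_mem_nhdsWithin] with ε (hε : 0 < ε)
  exact star_right_conjugate_le_conjugate (CFC.rpow_neg_le_rpow_neg hp (add_le_add_left hσσ' _)
    (isStrictlyPositive_add (Or.inr ⟨hσ, isStrictlyPositive_algebraMap hε⟩))) M

section Trace

variable {R : Type*} [CommRing R] (A B : Matrix n n R)

lemma trace_sq_mul_comm : ((A * B) ^ 2).trace = ((B * A) ^ 2).trace := by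
  rw [pow_two, pow_two, mul_assoc, trace_mul_comm]
  simp only [mul_assoc]

lemma trace_sq_conj : ((A * B * A) ^ 2).trace = ((B * (A * A)) ^ 2).trace := by
  rw [pow_two, pow_two, show A * B * A * (A * B * A) = A * (B * (A * A) * B * A) by noncomm_ring,
    trace_mul_comm, show B * (A * A) * B * A * A = B * (A * A) * (B * (A * A)) by noncomm_ring]

end Trace

variable {A B : Matrix n n ℂ}

lemma trace_mul_nonneg (hA : 0 ≤ A) (hB : 0 ≤ B) : 0 ≤ (A * B).trace := by
  rw [← CFC.sqrt_mul_sqrt_self A hA, mul_assoc, trace_mul_comm]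
  exact (conjugate_nonneg_of_nonneg hB (CFC.sqrt_nonneg A)).posSemidef.trace_nonneg

lemma trace_sq_le_trace_sq (hA : 0 ≤ A) (hAB : A ≤ B) : (A ^ 2).trace ≤ (B ^ 2).trace := by
  have hBA : 0 ≤ B - A := sub_nonneg.2 hAB
  rw [show B ^ 2 = A ^ 2 + ((B - A) * B + A * (B - A)) by noncomm_ring, trace_add, trace_add]
  exact le_add_of_nonneg_right
    (add_nonneg (trace_mul_nonneg hBA (hA.trans hAB)) (trace_mul_nonneg hA hBA))

lemma eq_zero_of_re_trace_sq_eq_zero (hA : 0 ≤ A) (h : (A ^ 2).trace.re = 0) : A = 0 := by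
  have him : (A ^ 2).trace.im = 0 :=
    (Complex.nonneg_iff.1 (pow_two A ▸ trace_mul_nonneg hA hA)).2.symm
  rw [← trace_conjTranspose_mul_self_eq_zero_iff, hA.posSemidef.isHermitian.eq, ← pow_two]
  exact Complex.ext h him

end Matrix

section CollisionEntropy

open Matrix

variable {ρ σ : Matrix n n ℂ}

lemma rpow_mul_mul_rpow_nonneg (hρ : 0 ≤ ρ) (r : ℝ) : 0 ≤ σ ^ r * ρ * σ ^ r :=
  conjugate_nonneg_of_nonneg hρ CFC.rpow_nonneg

lemma expD2_eq_rpow (hσ : 0 ≤ σ) :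
    expD2 ρ σ = ((σ ^ (-(4:ℝ)⁻¹) * ρ * σ ^ (-(4:ℝ)⁻¹)) ^ 2).trace.re := by
  rw [expD2, mpow_eq_rpow hσ (by norm_num)]

lemma expD2_eq_sqrt (hρ : 0 ≤ ρ) (hσ : 0 ≤ σ) :
    expD2 ρ σ = ((CFC.sqrt ρ * σ ^ (-(2:ℝ)⁻¹) * CFC.sqrt ρ) ^ 2).trace.re := by
  have hσ_half : σ ^ (-(2:ℝ)⁻¹) = σ ^ (-(4:ℝ)⁻¹) * σ ^ (-(4:ℝ)⁻¹) := by
    rw [← rpow_add' hσ (by norm_num)]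
    norm_num
  rw [expD2_eq_rpow hσ, trace_sq_conj, trace_sq_conj, CFC.sqrt_mul_sqrt_self ρ hρ, hσ_half,
    trace_sq_mul_comm]

lemma expD2_nonneg (hρ : 0 ≤ ρ) (hσ : 0 ≤ σ) : 0 ≤ expD2 ρ σ := by
  rw [expD2_eq_rpow hσ, pow_two]
  exact (Complex.nonneg_iff.1 (trace_mul_nonneg (rpow_mul_mul_rpow_nonneg hρ _)
    (rpow_mul_mul_rpow_nonneg hρ _))).1

lemma eq_zero_of_expD2_eq_zero (hρ : 0 ≤ ρ) (hσ : 0 ≤ σ) (hsupp : suppLE ρ σ)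
    (h : expD2 ρ σ = 0) : ρ = 0 := by
  have hsqrt : CFC.sqrt ρ * CFC.sqrt ρ = ρ := CFC.sqrt_mul_sqrt_self ρ hρ
  have hconj : σ ^ (-(4:ℝ)⁻¹) * ρ * σ ^ (-(4:ℝ)⁻¹) = 0 :=
    eq_zero_of_re_trace_sq_eq_zero (rpow_mul_mul_rpow_nonneg hρ _) (by rwa [expD2_eq_rpow hσ] at h)
  have hsqrt_mul : CFC.sqrt ρ * σ ^ (-(4:ℝ)⁻¹) = 0 := by
    rw [← conjTranspose_mul_self_eq_zero, conjTranspose_mul,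
      (CFC.sqrt_nonneg ρ).posSemidef.isHermitian.eq, CFC.rpow_nonneg.posSemidef.isHermitian.eq,
      mul_assoc, ← mul_assoc (CFC.sqrt ρ), hsqrt, ← mul_assoc, hconj]
  have hsqrt_zero : CFC.sqrt ρ = 0 := by
    rw [← (hsupp.sqrt hρ).mul_rpow_neg_mul_rpow hσ 4⁻¹, ← mul_assoc, hsqrt_mul, zero_mul]
  rw [← hsqrt, hsqrt_zero, zero_mul]

end CollisionEntropy

theorem collision_monotone_second_general (ρ σ σ' : Matrix n n ℂ)
    (hρ : ρ.PosSemidef) (hσ : σ.PosSemidef)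
    (hle : (σ' - σ).PosSemidef) (hsupp : suppLE ρ σ) :
    expD2 ρ σ' ≤ expD2 ρ σ ∧ D2 ρ σ' ≤ D2 ρ σ := by
  have hσσ' : σ ≤ σ' := hle
  have hσ' : 0 ≤ σ' := hσ.nonneg.trans hσσ'
  have hexp : expD2 ρ σ' ≤ expD2 ρ σ := by
    rw [expD2_eq_sqrt hρ.nonneg hσ', expD2_eq_sqrt hρ.nonneg hσ.nonneg]
    refine Complex.re_le_re (trace_sq_le_trace_sq
      (conjugate_nonneg_of_nonneg CFC.rpow_nonneg (CFC.sqrt_nonneg ρ)) ?_)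
    simpa only [(CFC.sqrt_nonneg ρ).isSelfAdjoint.star_eq] using
      mul_rpow_neg_mul_star_le hσ.nonneg hσσ' (hsupp.sqrt hρ.nonneg) (p := 2⁻¹)
        ⟨by norm_num, by norm_num⟩
  refine ⟨hexp, ?_⟩
  -- `Real.logb 2 0 = 0`, so the case `expD2 ρ σ' = 0` is settled by showing `ρ = 0`
  rcases (expD2_nonneg hρ.nonneg hσ').eq_or_lt with h0 | hpos
  · rw [eq_zero_of_expD2_eq_zero hρ.nonneg hσ' (hsupp.of_le hσ.nonneg hσσ') h0.symm]
    simp [D2, expD2]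
  · exact Real.logb_le_logb_of_le one_lt_two hpos hexp

/-- monotonicity of collision relative entropy in the second argument. -/
theorem collision_monotone_second (ρ σ σ' : Matrix n n ℂ)
    (hρ : ρ.PosSemidef) (hσ : σ.PosSemidef) (hσ' : σ'.PosSemidef)
    (hle : (σ' - σ).PosSemidef) (hsupp : suppLE ρ σ) :
    expD2 ρ σ' ≤ expD2 ρ σ ∧ D2 ρ σ' ≤ D2 ρ σ :=
  collision_monotone_second_general ρ σ σ' hρ hσ hle hsupp
end

section
/- For density matrices ρ, σ and M > 0, the measurement operator F_σ = (M^{-1}ρ + σ)^{-1/2} σ (M^{-1}ρ + σ)^{-1/2} satisfies tr(σ F_σ) ≥ (1 + M^{−1})^{−1}, i.e., the type II success probability is at least M/(M+1). -/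
open Matrix BigOperators ComplexOrder Kronecker

variable {n : Type*} [Fintype n] [DecidableEq n]

/-!
Put `A = M⁻¹ρ + σ`, `C = A^{-1/4} σ A^{-1/4}` and `S = A^{1/2}`. The success probability is
`tr C² = exp D₂(σ‖A)`. Since `supp σ ⊆ supp A`, `tr (C S) = tr (σ A⁰) = tr σ = 1`, and
`tr S² = tr A = 1 + M⁻¹`; the Cauchy–Schwarz inequality `(tr C S)² ≤ tr C² · tr S²` for Hermitian
matrices gives `tr C² ≥ (1 + M⁻¹)⁻¹`.
-/

section FunctionalCalculus

variable {A : Matrix n n ℂ}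

lemma mFun_of_isHermitian (hA : A.IsHermitian) (f : ℝ → ℝ) :
    mFun f A = (hA.eigenvectorUnitary : Matrix n n ℂ) *
      diagonal (fun i => (f (hA.eigenvalues i) : ℂ)) *
      star (hA.eigenvectorUnitary : Matrix n n ℂ) := dif_pos hA

lemma mFun_isHermitian (hA : A.IsHermitian) (f : ℝ → ℝ) : (mFun f A).IsHermitian := by
  have hD : (diagonal fun i => (f (hA.eigenvalues i) : ℂ)).IsHermitian :=
    isHermitian_diagonal_of_self_adjoint _ (funext fun i => Complex.conj_ofReal _)
  rw [mFun_of_isHermitian hA, star_eq_conjTranspose]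
  exact isHermitian_mul_mul_conjTranspose _ hD

lemma mFun_mul (hA : A.IsHermitian) (f g : ℝ → ℝ) :
    mFun f A * mFun g A = mFun (fun x => f x * g x) A := by
  have hU := mem_unitaryGroup_iff'.mp hA.eigenvectorUnitary.2
  simp only [mFun_of_isHermitian hA, Complex.ofReal_mul, ← diagonal_mul_diagonal, mul_assoc]
  rw [← mul_assoc (star _) _ (diagonal _ * _), hU, one_mul]

lemma mFun_congr (hA : A.IsHermitian) {f g : ℝ → ℝ}
    (h : ∀ i, f (hA.eigenvalues i) = g (hA.eigenvalues i)) : mFun f A = mFun g A := by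
  simp only [mFun_of_isHermitian hA, h]

lemma mFun_id (hA : A.IsHermitian) : mFun (fun x => x) A = A :=
  (mFun_of_isHermitian hA _).trans hA.spectral_theorem.symm

end FunctionalCalculus

section Power

variable {A : Matrix n n ℂ}

lemma mpow_isHermitian (hA : A.IsHermitian) (r : ℝ) : (mpow r A).IsHermitian :=
  mFun_isHermitian hA _

lemma mpow_mul_mpow (hA : A.PosSemidef) (r s : ℝ) : mpow r A * mpow s A = mpow (r + s) A := by
  rw [mpow, mpow, mFun_mul hA.1]
  refine mFun_congr hA.1 fun i => ?_
  rcases (hA.eigenvalues_nonneg i).eq_or_lt with h | h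
  · simp [← h]
  · simp [h.ne', Real.rpow_add h]

lemma mpow_one (hA : A.IsHermitian) : mpow 1 A = A := by
  conv_rhs => rw [← mFun_id hA]
  exact congrArg (mFun · A) (funext fun x => by split_ifs with h <;> simp [h])

lemma mul_mpow_zero (hA : A.IsHermitian) : A * mpow 0 A = A := by
  rw [mpow]
  nth_rewrite 1 [← mFun_id hA]
  conv_rhs => rw [← mFun_id hA]
  rw [mFun_mul hA]
  exact congrArg (mFun · A) (funext fun x => by split_ifs with h <;> simp [h])

end Power

section Support

variable {m : Type*} {σ A : Matrix n n ℂ}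

omit [DecidableEq n] in
lemma suppLE_add_left {ρ : Matrix n n ℂ} (hρ : ρ.PosSemidef) (hσ : σ.PosSemidef) :
    suppLE σ (ρ + σ) := by
  intro v hv
  have hsum : star v ⬝ᵥ ρ *ᵥ v + star v ⬝ᵥ σ *ᵥ v = 0 := by
    rw [← dotProduct_add, ← add_mulVec, hv, dotProduct_zero]
  refine (hσ.dotProduct_mulVec_zero_iff v).mp ?_
  exact ((add_eq_zero_iff_of_nonneg (hρ.dotProduct_mulVec_nonneg v)
    (hσ.dotProduct_mulVec_nonneg v)).mp hsum).2

omit [DecidableEq n] in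
lemma mul_eq_zero_of_suppLE (h : suppLE σ A) {X : Matrix n m ℂ} (hX : A * X = 0) : σ * X = 0 := by
  ext i j
  have hcol : A *ᵥ (fun k => X k j) = 0 := funext fun i' => by
    simpa [mulVec, dotProduct, mul_apply] using congrFun (congrFun hX i') j
  simpa [mulVec, dotProduct, mul_apply] using congrFun (h _ hcol) i

/-- `mpow 0 A` is the projection onto the support of `A`, as `mpow` sends the eigenvalue `0` to `0`. -/
lemma mul_mpow_zero_of_suppLE (hA : A.IsHermitian) (h : suppLE σ A) : σ * mpow 0 A = σ := by
  have h1 : σ * (1 - mpow 0 A) = 0 :=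
    mul_eq_zero_of_suppLE h (by rw [mul_sub, mul_one, mul_mpow_zero hA, sub_self])
  rwa [mul_sub, mul_one, sub_eq_zero, eq_comm] at h1

end Support

section Trace

variable {X Y : Matrix n n ℂ}

omit [DecidableEq n] in
lemma trace_mul_self_re_nonneg (hX : X.IsHermitian) : 0 ≤ (X * X).trace.re := by
  have h := (posSemidef_conjTranspose_mul_self X).trace_nonneg
  rw [hX.eq] at h
  exact (Complex.nonneg_iff.mp h).1

omit [DecidableEq n] in
lemma sq_trace_mul_re_le (hX : X.IsHermitian) (hY : Y.IsHermitian) :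
    (X * Y).trace.re ^ 2 ≤ (X * X).trace.re * (Y * Y).trace.re := by
  have hquad : ∀ t : ℝ, 0 ≤ (Y * Y).trace.re * (t * t) + (-2 * (X * Y).trace.re) * t
      + (X * X).trace.re := by
    intro t
    have hD : (X - (t : ℂ) • Y).IsHermitian := hX.sub (by
      rw [IsHermitian, conjTranspose_smul, hY.eq, Complex.star_def, Complex.conj_ofReal])
    have h := trace_mul_self_re_nonneg hD
    simp only [sub_mul, mul_sub, smul_mul, Matrix.mul_smul, smul_smul, trace_sub, trace_smul,
      trace_mul_comm Y X, smul_eq_mul, ← Complex.ofReal_mul, Complex.sub_re, Complex.re_ofReal_mul] at h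
    linarith
  have h := discrim_le_zero hquad
  rw [discrim] at h
  nlinarith

end Trace

lemma expD2_eq_trace_mul_mpow {A : Matrix n n ℂ} (hA : A.PosSemidef) (σ : Matrix n n ℂ) :
    expD2 σ A = (σ * (mpow (-(2:ℝ)⁻¹) A * σ * mpow (-(2:ℝ)⁻¹) A)).trace.re := by
  have hB : mpow (-(2:ℝ)⁻¹) A = mpow (-(4:ℝ)⁻¹) A * mpow (-(4:ℝ)⁻¹) A := by
    rw [mpow_mul_mpow hA]; norm_num
  rw [expD2, hB, sq]
  set B := mpow (-(4:ℝ)⁻¹) A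
  simp only [mul_assoc]
  rw [trace_mul_comm B]
  simp only [mul_assoc]

lemma sq_trace_le_expD2_mul_trace {σ A : Matrix n n ℂ} (hσ : σ.IsHermitian) (hA : A.PosSemidef)
    (h : suppLE σ A) : σ.trace.re ^ 2 ≤ expD2 σ A * A.trace.re := by
  set B := mpow (-(4:ℝ)⁻¹) A
  set S := mpow (2⁻¹ : ℝ) A
  have hB : B.IsHermitian := mpow_isHermitian hA.1 _
  have hC : (B * σ * B).IsHermitian := by
    simpa only [hB.eq] using isHermitian_mul_mul_conjTranspose B hσ
  have hCS : (B * σ * B * S).trace = σ.trace := by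
    rw [show B * σ * B * S = B * (σ * (B * S)) by simp only [mul_assoc], trace_mul_comm,
      mul_assoc σ, mpow_mul_mpow hA, mpow_mul_mpow hA, show -(4:ℝ)⁻¹ + 2⁻¹ + -4⁻¹ = 0 by norm_num,
      mul_mpow_zero_of_suppLE hA.1 h]
  have hSS : (S * S).trace = A.trace := by
    rw [mpow_mul_mpow hA, show (2:ℝ)⁻¹ + 2⁻¹ = 1 by norm_num, mpow_one hA.1]
  have hCS2 := sq_trace_mul_re_le hC (mpow_isHermitian hA.1 (2⁻¹ : ℝ))
  rwa [hCS, hSS, ← sq] at hCS2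

/-- the type II success probability is at least (1 + M⁻¹)⁻¹. -/
theorem type_two_success_bound (ρ σ : Matrix n n ℂ)
    (hρ : IsDensity ρ) (hσ : IsDensity σ) (M : ℝ) (hM : 0 < M) :
    (1 + M⁻¹)⁻¹ ≤ (σ * (mpow (-(2:ℝ)⁻¹) (M⁻¹ • ρ + σ) * σ
        * mpow (-(2:ℝ)⁻¹) (M⁻¹ • ρ + σ))).trace.re := by
  obtain ⟨hρP, hρT⟩ := hρ
  obtain ⟨hσP, hσT⟩ := hσ
  have hρM : (M⁻¹ • ρ).PosSemidef := hρP.smul (inv_nonneg.mpr hM.le)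
  have hA := hρM.add hσP
  have htrA : (M⁻¹ • ρ + σ).trace.re = 1 + M⁻¹ := by
    simp [trace_add, trace_smul, hρT, hσT, add_comm]
  have hbound := sq_trace_le_expD2_mul_trace hσP.1 hA (suppLE_add_left hρM hσP)
  rw [hσT, htrA, Complex.one_re, one_pow] at hbound
  rw [← expD2_eq_trace_mul_mpow hA, inv_le_iff_one_le_mul₀ (by positivity)]
  exact hbound
end
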